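/- arXiv:1506.00695 — 6 statements merged into one kernel-verified Lean document; each statement's English description precedes it below -/
import Mathlib

section
/- Let P be an element of the Laurent polynomial ring ℛ such that P = z^u · \overline{P} for some vector u ∈ ℤ^s, where z^u denotes the monomial z_1^{u_1}···z_s^{u_s}. Then either (i) u = 2w for some w ∈ ℤ^s and P = z^w · Q for some Q ∈ ℛ with Q = \overline{Q}, or (ii) there exists Q ∈ ℛ such that P = Q + z^u · \overline{Q} and P does not divide Q in ℛ. -/
open Complex

noncomputable section

/-- Exponents of Laurent monomials: a nonnegative exponent for `x`,
integer exponents for the `y`- and `z`-variables. -/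
abbrev LaurentExp (r s : ℕ) : Type := ℕ × (Fin r → ℤ) × (Fin s → ℤ)

/-- The ring ℛ = K[x, y₁, y₁⁻¹, …, y_r, y_r⁻¹, z₁, z₁⁻¹, …, z_s, z_s⁻¹]
of Laurent polynomials over a subfield K of ℂ. -/
abbrev LaurentRing (K : Subfield ℂ) (r s : ℕ) : Type :=
  AddMonoidAlgebra K (LaurentExp r s)

/-- Conjugation automorphism on the Laurent ring: conjugate the coefficients and
negate the exponents of the `z`-variables. -/
def lconj (K : Subfield ℂ) (hK : ∀ z ∈ K, (starRingEnd ℂ) z ∈ K) (r s : ℕ)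
    (P : LaurentRing K r s) : LaurentRing K r s :=
  Finsupp.sum P.coeff fun e c =>
    AddMonoidAlgebra.single (e.1, e.2.1, -e.2.2) (⟨(starRingEnd ℂ) (c : ℂ), hK _ c.2⟩ : K)

/-- The monomial z^u = z₁^{u₁} ⋯ z_s^{u_s}. -/
def zmon (K : Subfield ℂ) (r s : ℕ) (u : Fin s → ℤ) : LaurentRing K r s :=
  AddMonoidAlgebra.single ((0 : ℕ), (0 : Fin r → ℤ), u) 1

/-- Evaluation of P ∈ ℛ at x = t, y_j = e^{a_j t}, z_j = e^{i b_j t}. -/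
def leval (K : Subfield ℂ) (r s : ℕ) (a : Fin r → ℝ) (b : Fin s → ℝ)
    (P : LaurentRing K r s) (t : ℝ) : ℂ :=
  Finsupp.sum P.coeff fun e c =>
    (c : ℂ) * (t : ℂ) ^ e.1 *
      (∏ j, Complex.exp ((a j : ℂ) * t) ^ (e.2.1 j)) *
      (∏ j, Complex.exp (Complex.I * (b j : ℂ) * t) ^ (e.2.2 j))

/-- Schanuel's Conjecture: if a₁,…,aₙ are complex numbers linearly independent over ℚ,
then the field ℚ(a₁,…,aₙ, e^{a₁},…,e^{aₙ}) has transcendence degree at least n over ℚ,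
i.e. it contains n algebraically independent elements. -/
def SchanuelConjecture : Prop :=
  ∀ (n : ℕ) (a : Fin n → ℂ), LinearIndependent ℚ a →
    ∃ g : Fin n → ℂ,
      (∀ i, g i ∈ IntermediateField.adjoin ℚ
        (Set.range a ∪ Set.range fun i => Complex.exp (a i))) ∧
      AlgebraicIndependent ℚ g

/-!
If `u = 2w`, then `z^(-w) P` is self-conjugate. Otherwise the involution
`e ↦ (e_x, e_y, u - e_z)` of the exponents has no fixed point, and the hypothesis says that the
coefficients of `P` at `e` and at its reflection are conjugate. Keeping the terms of `P` whose
exponent lies above its reflection in a monomial order gives `Q` with `P = Q + z^u conj(Q)`, whose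
support is a nonempty proper subset of that of `P`. Comparing the largest and smallest exponents
in a monomial order, `P * R` can only have its support inside that of `P` when `R` is a constant,
so `P ∤ Q`. For `P = 0` take `Q = 1 - z^u`.
-/

namespace AddMonoidAlgebra

variable {R A B : Type*} [Semiring R] [NoZeroDivisors R] [AddMonoid A]
  [AddCommMonoid B] [LinearOrder B] [IsOrderedCancelAddMonoid B]
  {D : A → B}

theorem le_zero_of_support_mul_subset
    (hadd : ∀ a₁ a₂, D (a₁ + a₂) = D a₁ + D a₂) (hD : D.Injective) {p q : R[A]}
    (hp : p ≠ 0) (h : (p * q).coeff.support ⊆ p.coeff.support) {b : A}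
    (hb : b ∈ q.coeff.support) :
    D b ≤ 0 := by
  obtain ⟨a, ha, ha_max⟩ :=
    p.coeff.support.exists_max_image D (Finsupp.support_nonempty_iff.2 (coeff_eq_zero.not.2 hp))
  obtain ⟨c, hc, hc_max⟩ := q.coeff.support.exists_max_image D ⟨b, hb⟩
  have hunique : UniqueAdd p.coeff.support q.coeff.support a c := by
    intro x y hx hy hxy
    have hsum : D x + D y = D a + D c := by rw [← hadd, ← hadd, hxy]
    have hxa : D x = D a := by
      by_contra hne
      exact (add_lt_add_of_lt_of_le ((ha_max x hx).lt_of_ne hne) (hc_max y hy)).ne hsum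
    exact ⟨hD hxa, hD (add_left_cancel (hxa ▸ hsum))⟩
  have hac : a + c ∈ p.coeff.support := h <| by
    rw [Finsupp.mem_support_iff, coeff_mul_add_of_uniqueAdd hunique]
    exact mul_ne_zero (Finsupp.mem_support_iff.1 ha) (Finsupp.mem_support_iff.1 hc)
  have : D a + D c ≤ D a + 0 := by rw [add_zero, ← hadd]; exact ha_max _ hac
  exact (hc_max b hb).trans (le_of_add_le_add_left this)

theorem support_subset_zero_of_support_mul_subset
    (hadd : ∀ a₁ a₂, D (a₁ + a₂) = D a₁ + D a₂) (hD : D.Injective) {p q : R[A]}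
    (hp : p ≠ 0) (h : (p * q).coeff.support ⊆ p.coeff.support) : q.coeff.support ⊆ {0} := by
  intro b hb
  have hD0 : D 0 = 0 := by simpa using hadd 0 0
  refine Finset.mem_singleton.2 (hD (le_antisymm ?_ ?_)) <;> rw [hD0]
  · exact le_zero_of_support_mul_subset hadd hD hp h hb
  · exact le_zero_of_support_mul_subset (D := fun a => OrderDual.toDual (D a))
      (fun _ _ => congrArg _ (hadd _ _)) (OrderDual.toDual.injective.comp hD) hp h hb

theorem not_dvd_of_support_ssubset
    (hadd : ∀ a₁ a₂, D (a₁ + a₂) = D a₁ + D a₂) (hD : D.Injective) {p q : R[A]}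
    (hq : q ≠ 0) (h : q.coeff.support ⊂ p.coeff.support) : ¬ p ∣ q := by
  rintro ⟨c, rfl⟩
  have hp : p ≠ 0 := by rintro rfl; exact hq (zero_mul c)
  have hc : c = single 0 (c.coeff 0) := ext <| Finsupp.support_subset_singleton.1 <|
    support_subset_zero_of_support_mul_subset hadd hD hp h.subset
  have hc0 : c.coeff 0 ≠ 0 := by
    intro h0
    rw [h0, single_zero] at hc
    exact hq (by rw [hc, mul_zero])
  refine h.ne (Finset.ext fun e => ?_)
  rw [hc, Finsupp.mem_support_iff, Finsupp.mem_support_iff, coeff_mul_single_zero]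
  exact ⟨left_ne_zero_of_mul, fun he => mul_ne_zero he hc0⟩

end AddMonoidAlgebra

open ComplexConjugate

namespace LaurentRing

variable {K : Subfield ℂ} {hK : ∀ z ∈ K, (starRingEnd ℂ) z ∈ K} {r s : ℕ}

theorem coeff_lconj (X : LaurentRing K r s) (e : LaurentExp r s) :
    ((lconj K hK r s X).coeff e : ℂ) = conj (X.coeff (e.1, e.2.1, -e.2.2) : ℂ) := by
  rw [lconj, AddMonoidAlgebra.coeff_finsuppSum, Finsupp.sum_apply,
    Finsupp.sum_eq_single (e.1, e.2.1, -e.2.2)]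
  · simp [AddMonoidAlgebra.coeff_single]
  · intro e' _ hne
    rw [AddMonoidAlgebra.coeff_single, Finsupp.single_eq_of_ne]
    rintro rfl
    exact hne (by simp)
  · intro _
    simp [AddMonoidAlgebra.coeff_single, Subtype.ext_iff]

theorem coeff_zmon_mul (t : Fin s → ℤ) (X : LaurentRing K r s) (e : LaurentExp r s) :
    (zmon K r s t * X).coeff e = X.coeff (e.1, e.2.1, e.2.2 - t) := by
  rw [zmon, AddMonoidAlgebra.coeff_single_mul_eq_mul_coeff (e.1, e.2.1, e.2.2 - t), one_mul]
  rintro ⟨a₁, a₂, a₃⟩ -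
  obtain ⟨e₁, e₂, e₃⟩ := e
  simp only [Prod.mk_add_mk, Prod.mk.injEq, zero_add, eq_sub_iff_add_eq, add_comm t]

theorem zmon_add (t t' : Fin s → ℤ) :
    zmon K r s (t + t') = zmon K r s t * zmon K r s t' := by
  rw [zmon, zmon, zmon, AddMonoidAlgebra.single_mul_single, one_mul]
  rfl

theorem zmon_zero : zmon K r s 0 = 1 := rfl

theorem zmon_injective : Function.Injective (zmon K r s) := fun _ _ h =>
  congrArg (fun e : LaurentExp r s => e.2.2) ((AddMonoidAlgebra.single_left_inj one_ne_zero).1 h)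

theorem lconj_zmon (t : Fin s → ℤ) : lconj K hK r s (zmon K r s t) = zmon K r s (-t) := by
  rw [lconj, zmon, AddMonoidAlgebra.coeff_single,
    Finsupp.sum_single_index (by simp [Subtype.ext_iff])]
  congr 1
  ext
  simp

theorem lconj_sub (X Y : LaurentRing K r s) :
    lconj K hK r s (X - Y) = lconj K hK r s X - lconj K hK r s Y := by
  ext e
  simp [coeff_lconj]

theorem lconj_zmon_mul (t : Fin s → ℤ) (X : LaurentRing K r s) :
    lconj K hK r s (zmon K r s t * X) = zmon K r s (-t) * lconj K hK r s X := by
  ext e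
  simp only [coeff_lconj, coeff_zmon_mul, sub_neg_eq_add, neg_add']

theorem one_sub_zmon_add_zmon_mul_lconj (u : Fin s → ℤ) :
    (1 - zmon K r s u) + zmon K r s u * lconj K hK r s (1 - zmon K r s u) = 0 := by
  rw [lconj_sub, ← zmon_zero, lconj_zmon, lconj_zmon, neg_zero, mul_sub, ← zmon_add,
    ← zmon_add, add_zero, add_neg_cancel, sub_add_sub_cancel', sub_self]

def reflect (u : Fin s → ℤ) (e : LaurentExp r s) : LaurentExp r s := (e.1, e.2.1, u - e.2.2)

@[simp]
theorem reflect_reflect (u : Fin s → ℤ) (e : LaurentExp r s) : reflect u (reflect u e) = e := by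
  simp [reflect]

theorem reflect_ne_self {u : Fin s → ℤ} (hu : ¬ ∃ w, u = 2 • w) (e : LaurentExp r s) :
    reflect u e ≠ e := fun h =>
  hu ⟨e.2.2, by rw [two_smul, ← sub_eq_iff_eq_add]; exact congrArg (fun e => e.2.2) h⟩

theorem coeff_zmon_mul_lconj (u : Fin s → ℤ) (X : LaurentRing K r s) (e : LaurentExp r s) :
    ((zmon K r s u * lconj K hK r s X).coeff e : ℂ) = conj (X.coeff (reflect u e) : ℂ) := by
  rw [coeff_zmon_mul, coeff_lconj, neg_sub]
  rfl

def lexDegree (e : LaurentExp r s) : ℕ ×ₗ (Lex (Fin r → ℤ) ×ₗ Lex (Fin s → ℤ)) :=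
  toLex (e.1, toLex (toLex e.2.1, toLex e.2.2))

theorem lexDegree_add (e e' : LaurentExp r s) :
    lexDegree (e + e') = lexDegree e + lexDegree e' := rfl

theorem lexDegree_injective : Function.Injective (lexDegree : LaurentExp r s → _) := by
  intro e e' h
  simpa [lexDegree, Prod.ext_iff] using h

theorem lexDegree_lt_reflect_iff {u : Fin s → ℤ} (hu : ¬ ∃ w, u = 2 • w)
    (e : LaurentExp r s) :
    lexDegree e < lexDegree (reflect u e) ↔ ¬ lexDegree (reflect u e) < lexDegree e := by
  rw [not_lt]
  exact ⟨le_of_lt, fun h => h.lt_of_ne (lexDegree_injective.ne (reflect_ne_self hu e)).symm⟩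

def upperPart (u : Fin s → ℤ) (P : LaurentRing K r s) : LaurentRing K r s :=
  AddMonoidAlgebra.ofCoeff (P.coeff.filter fun e => lexDegree (reflect u e) < lexDegree e)

theorem coeff_upperPart (u : Fin s → ℤ) (P : LaurentRing K r s) (e : LaurentExp r s) :
    (upperPart u P).coeff e = if lexDegree (reflect u e) < lexDegree e then P.coeff e else 0 := by
  rw [upperPart, AddMonoidAlgebra.coeff_ofCoeff, Finsupp.filter_apply]

variable {u : Fin s → ℤ} {P : LaurentRing K r s}

theorem lconj_eq_zmon_neg_mul (hP : P = zmon K r s u * lconj K hK r s P) :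
    lconj K hK r s P = zmon K r s (-u) * P := by
  conv_rhs => rw [hP]
  rw [← mul_assoc, ← zmon_add, neg_add_cancel, zmon_zero, one_mul]

theorem lconj_zmon_neg_mul_self {w : Fin s → ℤ}
    (hP : P = zmon K r s (2 • w) * lconj K hK r s P) :
    lconj K hK r s (zmon K r s (-w) * P) = zmon K r s (-w) * P := by
  rw [lconj_zmon_mul, lconj_eq_zmon_neg_mul hP, ← mul_assoc, ← zmon_add, neg_neg, two_smul,
    neg_add, add_neg_cancel_left]

theorem coeff_eq_conj_coeff_reflect (hP : P = zmon K r s u * lconj K hK r s P)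
    (e : LaurentExp r s) :
    (P.coeff e : ℂ) = conj (P.coeff (reflect u e) : ℂ) := by
  conv_lhs => rw [hP]
  exact coeff_zmon_mul_lconj u P e

theorem eq_upperPart_add (hu : ¬ ∃ w, u = 2 • w) (hP : P = zmon K r s u * lconj K hK r s P) :
    P = upperPart u P + zmon K r s u * lconj K hK r s (upperPart u P) := by
  ext e
  rw [AddMonoidAlgebra.coeff_add, Finsupp.add_apply, Subfield.coe_add, coeff_zmon_mul_lconj,
    coeff_upperPart, coeff_upperPart]
  by_cases he : lexDegree (reflect u e) < lexDegree e
  · rw [reflect_reflect, if_pos he, if_neg (lt_asymm he), ZeroMemClass.coe_zero, map_zero,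
      add_zero]
  · rw [reflect_reflect, if_neg he, if_pos ((lexDegree_lt_reflect_iff hu e).2 he),
      ZeroMemClass.coe_zero, zero_add, coeff_eq_conj_coeff_reflect hP]

theorem reflect_mem_support (hP : P = zmon K r s u * lconj K hK r s P) {e : LaurentExp r s}
    (he : e ∈ P.coeff.support) : reflect u e ∈ P.coeff.support := by
  rw [Finsupp.mem_support_iff] at he ⊢
  intro h0
  have h := coeff_eq_conj_coeff_reflect hP e
  rw [h0, ZeroMemClass.coe_zero, map_zero] at h
  exact he (mod_cast h)

theorem exists_mem_support_reflect_lt (hu : ¬ ∃ w, u = 2 • w)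
    (hP : P = zmon K r s u * lconj K hK r s P) (hP0 : P ≠ 0) :
    ∃ e ∈ P.coeff.support, lexDegree (reflect u e) < lexDegree e := by
  obtain ⟨e, he⟩ := Finsupp.support_nonempty_iff.2 (AddMonoidAlgebra.coeff_eq_zero.not.2 hP0)
  by_cases hlt : lexDegree (reflect u e) < lexDegree e
  · exact ⟨e, he, hlt⟩
  · exact ⟨reflect u e, reflect_mem_support hP he,
      by rw [reflect_reflect]; exact (lexDegree_lt_reflect_iff hu e).2 hlt⟩

theorem support_upperPart_ssubset (hu : ¬ ∃ w, u = 2 • w)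
    (hP : P = zmon K r s u * lconj K hK r s P) (hP0 : P ≠ 0) :
    (upperPart u P).coeff.support ⊂ P.coeff.support := by
  obtain ⟨e, he, hlt⟩ := exists_mem_support_reflect_lt hu hP hP0
  have hsub : (upperPart u P).coeff.support ⊆ P.coeff.support := by
    rw [upperPart, AddMonoidAlgebra.coeff_ofCoeff, Finsupp.support_filter]
    exact Finset.filter_subset _ _
  refine (Finset.ssubset_iff_of_subset hsub).2 ⟨reflect u e, reflect_mem_support hP he, ?_⟩
  rw [Finsupp.mem_support_iff, coeff_upperPart, reflect_reflect, if_neg (lt_asymm hlt)]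
  exact fun h => h rfl

theorem upperPart_ne_zero (hu : ¬ ∃ w, u = 2 • w)
    (hP : P = zmon K r s u * lconj K hK r s P) (hP0 : P ≠ 0) : upperPart u P ≠ 0 := by
  obtain ⟨e, he, hlt⟩ := exists_mem_support_reflect_lt hu hP hP0
  intro h0
  have := congrArg (fun X : LaurentRing K r s => X.coeff e) h0
  simp only [coeff_upperPart, if_pos hlt] at this
  exact Finsupp.mem_support_iff.1 he this

theorem not_dvd_upperPart (hu : ¬ ∃ w, u = 2 • w)
    (hP : P = zmon K r s u * lconj K hK r s P) (hP0 : P ≠ 0) : ¬ P ∣ upperPart u P :=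
  AddMonoidAlgebra.not_dvd_of_support_ssubset lexDegree_add lexDegree_injective
    (upperPart_ne_zero hu hP hP0) (support_upperPart_ssubset hu hP hP0)

end LaurentRing

theorem laurent_conj_associate_dichotomy_general
    (K : Subfield ℂ)
    (hK : ∀ z ∈ K, (starRingEnd ℂ) z ∈ K) (r s : ℕ)
    (P : LaurentRing K r s) (u : Fin s → ℤ)
    (hP : P = zmon K r s u * lconj K hK r s P) :
    (∃ w : Fin s → ℤ, u = 2 • w ∧
      ∃ Q : LaurentRing K r s, P = zmon K r s w * Q ∧ lconj K hK r s Q = Q) ∨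
    (∃ Q : LaurentRing K r s,
      P = Q + zmon K r s u * lconj K hK r s Q ∧ ¬ P ∣ Q) := by
  by_cases hu : ∃ w : Fin s → ℤ, u = 2 • w
  · obtain ⟨w, rfl⟩ := hu
    refine Or.inl ⟨w, rfl, zmon K r s (-w) * P, ?_, LaurentRing.lconj_zmon_neg_mul_self hP⟩
    rw [← mul_assoc, ← LaurentRing.zmon_add, add_neg_cancel, LaurentRing.zmon_zero, one_mul]
  right
  rcases eq_or_ne P 0 with rfl | hP0
  · have hu0 : u ≠ 0 := fun h => hu ⟨0, by rw [h, smul_zero]⟩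
    refine ⟨1 - zmon K r s u, (LaurentRing.one_sub_zmon_add_zmon_mul_lconj u).symm, ?_⟩
    rw [zero_dvd_iff, sub_eq_zero, ← LaurentRing.zmon_zero]
    exact LaurentRing.zmon_injective.ne hu0.symm
  · exact ⟨LaurentRing.upperPart u P, LaurentRing.eq_upperPart_add hu hP,
      LaurentRing.not_dvd_upperPart hu hP hP0⟩

/-- Proposition 1: if P = z^u · conj(P), then either u = 2w and P = z^w · Q with Q = conj(Q),
or P = Q + z^u · conj(Q) for some Q not divisible by P. -/
theorem laurent_conj_associate_dichotomy
    (K : Subfield ℂ) [FiniteDimensional ℚ K]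
    (hK : ∀ z ∈ K, (starRingEnd ℂ) z ∈ K) (r s : ℕ)
    (P : LaurentRing K r s) (u : Fin s → ℤ)
    (hP : P = zmon K r s u * lconj K hK r s P) :
    (∃ w : Fin s → ℤ, u = 2 • w ∧
      ∃ Q : LaurentRing K r s, P = zmon K r s w * Q ∧ lconj K hK r s Q = Q) ∨
    (∃ Q : LaurentRing K r s,
      P = Q + zmon K r s u * lconj K hK r s Q ∧ ¬ P ∣ Q) :=
  laurent_conj_associate_dichotomy_general K hK r s P u hP
end
end

section
/- Let {a_1,…,a_r} and {b_1,…,b_s} be ℚ-linearly independent sets of real algebraic numbers with a_1,…,a_r, i·b_1,…, i·b_s ∈ K, and let P ∈ ℛ be irreducible (in particular not a unit). Define Q := ∂P/∂x + Σ_{j=1}^r a_j · y_j · ∂P/∂y_j + Σ_{j=1}^s i·b_j · z_j · ∂P/∂z_j ∈ ℛ. Then P does not divide Q in ℛ; consequently P and Q are coprime in ℛ. -/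
/-!
Write ℛ = K[ℕ × G] with G = ℤʳ × ℤˢ. The map P ↦ Q sends xⁿ·g to n xⁿ⁻¹·g + w(g) xⁿ·g, where
w(u, v) = Σ uⱼ aⱼ + Σ vⱼ i bⱼ is injective because the aⱼ and the bⱼ are linearly independent.
Suppose Q = P R. Order exponents lexicographically by (w(g), n), comparing w(g) through its real
and imaginary parts. Every exponent of Q lies below an exponent of P, so comparing leading
exponents of P R gives that every exponent of R is ≤ 0; the same argument with w replaced by -w
makes R a constant c. Then ∂/∂x + w(g) - c kills each G-homogeneous part of P, which leaves a
single monomial g with w(g) = c and no x: P would be a unit.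
-/

open Complex

noncomputable section

/-- Formal partial derivative ∂P/∂x, term by term on Laurent monomials. -/
def derivX (K : Subfield ℂ) (r s : ℕ) (P : LaurentRing K r s) : LaurentRing K r s :=
  Finsupp.sum P.coeff fun e c =>
    AddMonoidAlgebra.single (e.1 - 1, e.2.1, e.2.2) ((e.1 : K) * c)

/-- Formal partial derivative ∂P/∂y_j, term by term on Laurent monomials. -/
def derivY (K : Subfield ℂ) (r s : ℕ) (j : Fin r) (P : LaurentRing K r s) :
    LaurentRing K r s :=
  Finsupp.sum P.coeff fun e c =>
    AddMonoidAlgebra.single (e.1, e.2.1 - Pi.single j 1, e.2.2) ((e.2.1 j : K) * c)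

/-- Formal partial derivative ∂P/∂z_j, term by term on Laurent monomials. -/
def derivZ (K : Subfield ℂ) (r s : ℕ) (j : Fin s) (P : LaurentRing K r s) :
    LaurentRing K r s :=
  Finsupp.sum P.coeff fun e c =>
    AddMonoidAlgebra.single (e.1, e.2.1, e.2.2 - Pi.single j 1) ((e.2.2 j : K) * c)

open AddMonoidAlgebra

namespace AddMonoidAlgebra

variable {R : Type*} [Semiring R]

theorem isUnit_single {M : Type*} [AddMonoid M] {a : M} {r : R} (ha : IsAddUnit a)
    (hr : IsUnit r) : IsUnit (single a r) := by
  obtain ⟨a, rfl⟩ := ha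
  obtain ⟨r, rfl⟩ := hr
  exact ⟨⟨single a r, single (-a : AddUnits M) ↑r⁻¹, by simp [single_mul_single, one_def],
    by simp [single_mul_single, one_def]⟩, rfl⟩

variable {A C : Type*} [Add A] [AddCommMonoid C] [LinearOrder C] [IsOrderedCancelAddMonoid C]
  {φ : A → C}

theorem uniqueAdd_of_forall_le (hφ : Function.Injective φ)
    (hadd : ∀ a b, φ (a + b) = φ a + φ b) {S T : Finset A} {a₀ b₀ : A}
    (ha : ∀ a ∈ S, φ a ≤ φ a₀) (hb : ∀ b ∈ T, φ b ≤ φ b₀) : UniqueAdd S T a₀ b₀ := by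
  intro a b haS hbT hab
  have h := (add_eq_add_iff_eq_and_eq (ha a haS) (hb b hbT)).mp (by rw [← hadd, ← hadd, hab])
  exact ⟨hφ h.1, hφ h.2⟩

theorem le_zero_of_support_mul_le [NoZeroDivisors R] (hφ : Function.Injective φ)
    (hadd : ∀ a b, φ (a + b) = φ a + φ b) {f g : R[A]} (hf : f ≠ 0)
    (hfg : ∀ c ∈ (f * g).coeff.support, ∃ a ∈ f.coeff.support, φ c ≤ φ a)
    {b : A} (hb : b ∈ g.coeff.support) : φ b ≤ 0 := by
  obtain ⟨a₀, ha₀, ha₀max⟩ := f.coeff.support.exists_max_image φ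
    (Finsupp.support_nonempty_iff.mpr (coeff_eq_zero.not.mpr hf))
  obtain ⟨b₀, hb₀, hb₀max⟩ := g.coeff.support.exists_max_image φ ⟨b, hb⟩
  have htop : a₀ + b₀ ∈ (f * g).coeff.support := by
    rw [Finsupp.mem_support_iff,
      coeff_mul_add_of_uniqueAdd (uniqueAdd_of_forall_le hφ hadd ha₀max hb₀max)]
    exact mul_ne_zero (Finsupp.mem_support_iff.mp ha₀) (Finsupp.mem_support_iff.mp hb₀)
  obtain ⟨a, ha, hle⟩ := hfg _ htop
  have : φ a₀ + φ b₀ ≤ φ a₀ + 0 := by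
    rw [← hadd, add_zero]
    exact hle.trans (ha₀max a ha)
  exact (hb₀max b hb).trans (le_of_add_le_add_left this)

end AddMonoidAlgebra

variable {k G : Type*}

/-- `Q` is `∂P/∂x` plus the operator scaling the monomial `xⁿ g` (exponent `(n, g)`) by `w g`. -/
def IsWeightedDeriv [Semiring k] (w : G → k) (P Q : k[ℕ × G]) : Prop :=
  ∀ e : ℕ × G, Q.coeff e = ((e.1 + 1 : ℕ) : k) * P.coeff (e.1 + 1, e.2) + w e.2 * P.coeff e

namespace IsWeightedDeriv

section Semiring

variable [Semiring k] {w : G → k} {P : k[ℕ × G]}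

theorem exists_mem_support {Q : k[ℕ × G]} (hD : IsWeightedDeriv w P Q) {e : ℕ × G}
    (he : e ∈ Q.coeff.support) : ∃ e' ∈ P.coeff.support, e'.2 = e.2 ∧ e.1 ≤ e'.1 := by
  by_cases h : P.coeff (e.1 + 1, e.2) = 0
  · refine ⟨e, ?_, rfl, le_rfl⟩
    rw [Finsupp.mem_support_iff] at he ⊢
    intro hPe
    exact he (by rw [hD e, h, hPe]; simp)
  · exact ⟨_, Finsupp.mem_support_iff.mpr h, rfl, Nat.le_succ _⟩

theorem eq_single_zero_of_mul [NoZeroDivisors k] [AddCommMonoid G] {B : Type*} [AddCommGroup B]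
    [LinearOrder B] [IsOrderedAddMonoid B] {ω : G →+ B} (hω : Function.Injective ω)
    {R : k[ℕ × G]} (hP : P ≠ 0) (hD : IsWeightedDeriv w P (P * R)) :
    R = single 0 (R.coeff 0) := by
  have key : ∀ ψ : G →+ B, Function.Injective ψ →
      ∀ e ∈ R.coeff.support, toLex (ψ e.2, e.1) ≤ 0 := by
    intro ψ hψ e he
    refine le_zero_of_support_mul_le (φ := fun e : ℕ × G ↦ toLex (ψ e.2, e.1)) ?_ ?_ hP ?_ he
    · intro e e' h
      simp only [toLex_inj, Prod.mk.injEq] at h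
      exact Prod.ext h.2 (hψ h.1)
    · intro e e'
      simp only [Prod.snd_add, Prod.fst_add, map_add]
      rfl
    · intro c hc
      obtain ⟨e', he', h2, h1⟩ := hD.exists_mem_support hc
      exact ⟨e', he', Prod.Lex.toLex_le_toLex.mpr (.inr ⟨by rw [h2], h1⟩)⟩
  refine coeff_injective (Finsupp.eq_single_iff.mpr ⟨fun e he ↦ ?_, rfl⟩)
  have hpos := key ω hω e he
  have hneg := key (-ω) (neg_injective.comp hω) e he
  simp only [← toLex_zero, Prod.Lex.toLex_le_toLex, Prod.fst_zero, Prod.snd_zero,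
    AddMonoidHom.neg_apply, Left.neg_neg_iff, neg_eq_zero, nonpos_iff_eq_zero] at hpos hneg
  obtain ⟨hω0, h1⟩ : ω e.2 = 0 ∧ e.1 = 0 := by
    rcases hpos with hpos | hpos
    · exact hneg.resolve_left hpos.not_gt
    · exact hpos
  exact Finset.mem_singleton.mpr (Prod.ext h1 (hω (hω0.trans (map_zero ω).symm)))

end Semiring

section Field

variable [Field k] {w : G → k} {P : k[ℕ × G]} {c : k}

theorem weight_eq_of_mem_support [AddMonoid G] (hD : IsWeightedDeriv w P (P * single 0 c))
    {e : ℕ × G} (he : e ∈ P.coeff.support) : w e.2 = c := by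
  classical
  obtain ⟨m, hm, hmax⟩ := ({e' ∈ P.coeff.support | e'.2 = e.2} : Finset _).exists_max_image
    Prod.fst ⟨e, Finset.mem_filter.mpr ⟨he, rfl⟩⟩
  obtain ⟨hmP, hm2⟩ := Finset.mem_filter.mp hm
  have htop : P.coeff (m.1 + 1, m.2) = 0 := by
    by_contra hne
    have := hmax _ (Finset.mem_filter.mpr ⟨Finsupp.mem_support_iff.mpr hne, hm2⟩)
    omega
  have h := hD m
  rw [coeff_mul_single_zero, htop, mul_zero, zero_add, mul_comm] at h
  rw [← hm2]
  exact mul_right_cancel₀ (Finsupp.mem_support_iff.mp hmP) h.symm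

theorem fst_eq_zero_of_mem_support [AddMonoid G] [CharZero k]
    (hD : IsWeightedDeriv w P (P * single 0 c)) {e : ℕ × G} (he : e ∈ P.coeff.support) :
    e.1 = 0 := by
  by_contra hne
  obtain ⟨n, hn⟩ := Nat.exists_eq_succ_of_ne_zero hne
  have h := hD (n, e.2)
  rw [coeff_mul_single_zero, weight_eq_of_mem_support hD he,
    show ((n + 1, e.2) : ℕ × G) = e from Prod.ext hn.symm rfl] at h
  have h0 : ((n + 1 : ℕ) : k) * P.coeff e = 0 := by linear_combination -h
  exact mul_ne_zero (Nat.cast_ne_zero.mpr n.succ_ne_zero) (Finsupp.mem_support_iff.mp he) h0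

theorem isUnit_of_mul_single [AddGroup G] [CharZero k] (hw : Function.Injective w) (hP : P ≠ 0)
    (hD : IsWeightedDeriv w P (P * single 0 c)) : IsUnit P := by
  obtain ⟨e, he⟩ := Finsupp.support_nonempty_iff.mpr (coeff_eq_zero.not.mpr hP)
  have hsupp : P.coeff.support ⊆ {(0, e.2)} := fun e' he' ↦ Finset.mem_singleton.mpr <|
    Prod.ext (fst_eq_zero_of_mem_support hD he')
      (hw (by rw [weight_eq_of_mem_support hD he', weight_eq_of_mem_support hD he]))
  have hPe : P = single (0, e.2) (P.coeff e) := by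
    refine coeff_injective (Finsupp.eq_single_iff.mpr ⟨hsupp, ?_⟩)
    rw [← fst_eq_zero_of_mem_support hD he]
  rw [hPe]
  exact isUnit_single (Prod.isAddUnit_iff.mpr ⟨isAddUnit_zero, AddGroup.isAddUnit _⟩)
    (Finsupp.mem_support_iff.mp he).isUnit

end Field

end IsWeightedDeriv

namespace LaurentRing

variable {K : Subfield ℂ} {r s : ℕ}

theorem coeff_derivX (P : LaurentRing K r s) (e : LaurentExp r s) :
    (derivX K r s P).coeff e = ((e.1 + 1 : ℕ) : K) * P.coeff (e.1 + 1, e.2) := by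
  classical
  rw [derivX, coeff_finsuppSum, Finsupp.sum_apply, Finsupp.sum_eq_single (e.1 + 1, e.2)]
  · simp
  · intro e' _ hne
    rw [coeff_single, Finsupp.single_apply, ite_eq_right_iff]
    intro h
    have : e'.1 = 0 := by
      by_contra h0
      exact hne (Prod.ext (by rw [← h]; omega) (by rw [← h]))
    simp [this]
  · simp

theorem coeff_single_mul_derivY (P : LaurentRing K r s) (j : Fin r) (c : K)
    (e : LaurentExp r s) :
    (single ((0 : ℕ), (Pi.single j 1 : Fin r → ℤ), (0 : Fin s → ℤ)) c
      * derivY K r s j P).coeff e = c * (e.2.1 j : K) * P.coeff e := by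
  classical
  rw [derivY, Finsupp.sum, Finset.mul_sum, coeff_sum, Finset.sum_apply', Finset.sum_eq_single e]
  · simp [single_mul_single, mul_assoc]
  · intro e' _ hne
    simp [single_mul_single, hne]
  · intro he
    simp [Finsupp.notMem_support_iff.mp he]

theorem coeff_single_mul_derivZ (P : LaurentRing K r s) (j : Fin s) (c : K)
    (e : LaurentExp r s) :
    (single ((0 : ℕ), (0 : Fin r → ℤ), (Pi.single j 1 : Fin s → ℤ)) c
      * derivZ K r s j P).coeff e = c * (e.2.2 j : K) * P.coeff e := by
  classical
  rw [derivZ, Finsupp.sum, Finset.mul_sum, coeff_sum, Finset.sum_apply', Finset.sum_eq_single e]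
  · simp [single_mul_single, mul_assoc]
  · intro e' _ hne
    simp [single_mul_single, hne]
  · intro he
    simp [Finsupp.notMem_support_iff.mp he]

variable (a : Fin r → ℝ) (b : Fin s → ℝ) (haK : ∀ j, (a j : ℂ) ∈ K)
  (hbK : ∀ j, Complex.I * (b j : ℂ) ∈ K)

def expWeight : (Fin r → ℤ) × (Fin s → ℤ) →+ K where
  toFun g :=
    ∑ j, ⟨(a j : ℂ), haK j⟩ * (g.1 j : K) + ∑ j, ⟨Complex.I * (b j : ℂ), hbK j⟩ * (g.2 j : K)
  map_zero' := by simp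
  map_add' g g' := by
    simp only [Prod.fst_add, Prod.snd_add, Pi.add_apply, Int.cast_add, mul_add,
      Finset.sum_add_distrib]
    abel

theorem expWeight_injective (haLI : LinearIndependent ℚ a) (hbLI : LinearIndependent ℚ b) :
    Function.Injective (expWeight a b haK hbK) := by
  refine (injective_iff_map_eq_zero _).mpr fun g hg ↦ ?_
  have h₁ := Fintype.linearIndependent_iff.mp (haLI.restrict_scalars' ℤ) g.1 <| by
    simpa [expWeight, zsmul_eq_mul, mul_comm] using congrArg (fun z : K ↦ (z : ℂ).re) hg
  have h₂ := Fintype.linearIndependent_iff.mp (hbLI.restrict_scalars' ℤ) g.2 <| by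
    simpa [expWeight, zsmul_eq_mul, mul_comm] using congrArg (fun z : K ↦ (z : ℂ).im) hg
  exact Prod.ext (funext h₁) (funext h₂)

theorem isWeightedDeriv_expWeight (P : LaurentRing K r s) :
    IsWeightedDeriv (expWeight a b haK hbK) P (derivX K r s P
        + ∑ j, single ((0 : ℕ), (Pi.single j 1 : Fin r → ℤ), (0 : Fin s → ℤ))
            (⟨(a j : ℂ), haK j⟩ : K) * derivY K r s j P
        + ∑ j, single ((0 : ℕ), (0 : Fin r → ℤ), (Pi.single j 1 : Fin s → ℤ))
            (⟨Complex.I * (b j : ℂ), hbK j⟩ : K) * derivZ K r s j P) := by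
  intro e
  simp only [coeff_add, Finsupp.add_apply, coeff_sum, Finsupp.finsetSum_apply, coeff_derivX,
    coeff_single_mul_derivY, coeff_single_mul_derivZ]
  simp only [expWeight, AddMonoidHom.coe_mk, ZeroHom.coe_mk, add_mul, Finset.sum_mul, add_assoc]

end LaurentRing

theorem irreducible_not_dvd_deriv_general
    (K : Subfield ℂ) (r s : ℕ)
    (a : Fin r → ℝ) (b : Fin s → ℝ)
    (haLI : LinearIndependent ℚ a) (hbLI : LinearIndependent ℚ b)
    (haK : ∀ j, (a j : ℂ) ∈ K) (hbK : ∀ j, Complex.I * (b j : ℂ) ∈ K)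
    (P : LaurentRing K r s) (hirr : Irreducible P)
    (Q : LaurentRing K r s)
    (hQ : Q = derivX K r s P
        + ∑ j, AddMonoidAlgebra.single ((0 : ℕ), (Pi.single j 1 : Fin r → ℤ), (0 : Fin s → ℤ))
            (⟨(a j : ℂ), haK j⟩ : K) * derivY K r s j P
        + ∑ j, AddMonoidAlgebra.single ((0 : ℕ), (0 : Fin r → ℤ), (Pi.single j 1 : Fin s → ℤ))
            (⟨Complex.I * (b j : ℂ), hbK j⟩ : K) * derivZ K r s j P) :
    ¬ P ∣ Q ∧ ∀ D : LaurentRing K r s, D ∣ P → D ∣ Q → IsUnit D := by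
  have hD : IsWeightedDeriv (LaurentRing.expWeight a b haK hbK) P Q :=
    hQ ▸ LaurentRing.isWeightedDeriv_expWeight a b haK hbK P
  have hw := LaurentRing.expWeight_injective a b haK hbK haLI hbLI
  have hndvd : ¬ P ∣ Q := by
    rintro ⟨R, rfl⟩
    let ω : (Fin r → ℤ) × (Fin s → ℤ) →+ ℝ ×ₗ ℝ :=
      (toLexAddEquiv (ℝ × ℝ)).toAddMonoidHom.comp <|
        Complex.equivRealProdAddHom.toAddMonoidHom.comp <|
          K.subtype.toAddMonoidHom.comp (LaurentRing.expWeight a b haK hbK)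
    have hω : Function.Injective ω := (toLexAddEquiv _).injective.comp <|
      Complex.equivRealProdAddHom.injective.comp <| Subtype.val_injective.comp hw
    rw [hD.eq_single_zero_of_mul hω hirr.ne_zero] at hD
    exact hirr.not_isUnit (hD.isUnit_of_mul_single hw hirr.ne_zero)
  exact ⟨hndvd, hirr.isRelPrime_iff_not_dvd.mpr hndvd⟩

/-- If P ∈ ℛ is irreducible then P does not divide
Q = ∂P/∂x + Σ_j a_j y_j ∂P/∂y_j + Σ_j i b_j z_j ∂P/∂z_j; consequently P and Q are coprime. -/
theorem irreducible_not_dvd_deriv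
    (K : Subfield ℂ) [FiniteDimensional ℚ K]
    (hK : ∀ z ∈ K, (starRingEnd ℂ) z ∈ K) (r s : ℕ)
    (a : Fin r → ℝ) (b : Fin s → ℝ)
    (haAlg : ∀ j, IsAlgebraic ℚ (a j)) (hbAlg : ∀ j, IsAlgebraic ℚ (b j))
    (haLI : LinearIndependent ℚ a) (hbLI : LinearIndependent ℚ b)
    (haK : ∀ j, (a j : ℂ) ∈ K) (hbK : ∀ j, Complex.I * (b j : ℂ) ∈ K)
    (P : LaurentRing K r s) (hirr : Irreducible P)
    (Q : LaurentRing K r s)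
    (hQ : Q = derivX K r s P
        + ∑ j, AddMonoidAlgebra.single ((0 : ℕ), (Pi.single j 1 : Fin r → ℤ), (0 : Fin s → ℤ))
            (⟨(a j : ℂ), haK j⟩ : K) * derivY K r s j P
        + ∑ j, AddMonoidAlgebra.single ((0 : ℕ), (0 : Fin r → ℤ), (Pi.single j 1 : Fin s → ℤ))
            (⟨Complex.I * (b j : ℂ), hbK j⟩ : K) * derivZ K r s j P) :
    ¬ P ∣ Q ∧ ∀ D : LaurentRing K r s, D ∣ P → D ∣ Q → IsUnit D :=
  irreducible_not_dvd_deriv_general K r s a b haLI hbLI haK hbK P hirr Q hQ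
end
end

section
/- Let P be a polynomial in n+1 variables with real algebraic coefficients and let r_1, …, r_n be real algebraic numbers. Then there exists T ∈ ℝ such that the function t ↦ P(t, e^{r_1 t}, …, e^{r_n t}) is either identically zero on (T, ∞), or strictly positive throughout (T, ∞), or strictly negative throughout (T, ∞). In particular, for any semi-algebraic condition given by a single polynomial sign constraint, the set {t ≥ 0 : P(t, e^{r_1 t}, …, e^{r_n t}) satisfies the constraint} either contains an interval (T, ∞) or is disjoint from such an interval. -/
/-!
Substituting `t` and `e^{r_j t}` turns `P` into an exponential polynomial
`∑ c_{a,k} t^k e^{a t}`, with the monomials collected by the pair `(a, k)`. For the lexicographic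
order on these pairs, a smaller pair gives a monomial that is `o` of a larger one, so a nonzero
exponential polynomial is asymptotically equivalent to its leading term, whose sign is eventually
that of its coefficient.
-/

open Filter Real Asymptotics

noncomputable def expMonomial (p : ℝ × ℕ) (t : ℝ) : ℝ := t ^ p.2 * exp (p.1 * t)

lemma expMonomial_pos (p : ℝ × ℕ) {t : ℝ} (ht : 0 < t) : 0 < expMonomial p t := by
  unfold expMonomial; positivity

lemma expMonomial_isLittleO_of_lt {p q : ℝ × ℕ} (h : toLex p < toLex q) :
    expMonomial p =o[atTop] expMonomial q := by
  obtain ⟨a, k⟩ := p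
  obtain ⟨b, l⟩ := q
  rcases Prod.Lex.toLex_lt_toLex.1 h with hab | ⟨rfl, hkl⟩
  · have hexp : (fun t => t ^ k * exp (a * t)) =o[atTop] fun t => exp (b * t) := by
      have := (isLittleO_pow_exp_pos_mul_atTop k (sub_pos.2 hab)).mul_isBigO
        (isBigO_refl (fun t => exp (a * t)) atTop)
      refine this.congr_right fun t => ?_
      rw [← exp_add]; ring_nf
    refine hexp.trans_isBigO (IsBigO.of_bound 1 ?_)
    filter_upwards [eventually_ge_atTop 1] with t ht
    rw [one_mul, norm_of_nonneg (exp_pos _).le,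
      norm_of_nonneg (expMonomial_pos (b, l) (by linarith)).le]
    exact le_mul_of_one_le_left (exp_pos _).le (one_le_pow₀ ht)
  · exact (isLittleO_pow_pow_atTop_of_lt hkl).mul_isBigO (isBigO_refl _ _)

noncomputable def expPoly (c : (ℝ × ℕ) →₀ ℝ) (t : ℝ) : ℝ :=
  Finsupp.linearCombination ℝ (fun p => expMonomial p t) c

lemma expPoly_isEquivalent_leading {c : (ℝ × ℕ) →₀ ℝ} {m : ℝ × ℕ} (hm : m ∈ c.support)
    (hmax : ∀ p ∈ c.support, toLex p ≤ toLex m) :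
    expPoly c ~[atTop] fun t => c m * expMonomial m t := by
  have hlower : (expPoly c - fun t => c m * expMonomial m t) =
      ∑ p ∈ c.support.erase m, fun t => c p * expMonomial p t := by
    ext t
    simp only [expPoly, Finsupp.linearCombination_apply, Finsupp.sum, smul_eq_mul, Pi.sub_apply,
      Finset.sum_apply, ← Finset.add_sum_erase _ _ hm]
    ring
  rw [IsEquivalent, hlower]
  refine IsLittleO.sum fun p hp => ?_
  have hpm : toLex p < toLex m := (hmax p (Finset.mem_of_mem_erase hp)).lt_of_ne
    (by simpa using Finset.ne_of_mem_erase hp)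
  exact ((expMonomial_isLittleO_of_lt hpm).const_mul_right
    (Finsupp.mem_support_iff.1 hm)).const_mul_left _

lemma expPoly_eventually_trichotomy (c : (ℝ × ℕ) →₀ ℝ) :
    (∀ᶠ t in atTop, expPoly c t = 0) ∨ (∀ᶠ t in atTop, 0 < expPoly c t) ∨
      (∀ᶠ t in atTop, expPoly c t < 0) := by
  rcases c.support.eq_empty_or_nonempty with hc | hc
  · left
    exact .of_forall fun t => by
      simp [expPoly, Finsupp.linearCombination_apply, Finsupp.sum, hc]
  obtain ⟨m, hm, hmax⟩ := c.support.exists_max_image toLex hc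
  have hequiv := expPoly_isEquivalent_leading hm hmax
  have hmono : ∀ᶠ t in atTop, 0 < expMonomial m t :=
    (eventually_gt_atTop 0).mono fun t => expMonomial_pos m
  right
  rcases (Finsupp.mem_support_iff.1 hm).lt_or_gt with hneg | hpos
  · exact .inr (hequiv.eventually_neg (hmono.mono fun t => mul_neg_of_neg_of_pos hneg))
  · exact .inl (hequiv.eventually_pos (hmono.mono fun t => mul_pos hpos))

section

variable {n : ℕ} (r : Fin n → ℝ)

def expMonomialIndex (d : Fin (n + 1) →₀ ℕ) : ℝ × ℕ := (∑ j, (d j.succ : ℝ) * r j, d 0)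

lemma prod_cons_exp_pow_eq_expMonomial (d : Fin (n + 1) →₀ ℕ) (t : ℝ) :
    ∏ i, (Fin.cons t fun j => exp (r j * t) : Fin (n + 1) → ℝ) i ^ d i =
      expMonomial (expMonomialIndex r d) t := by
  simp only [Fin.prod_univ_succ, Fin.cons_zero, Fin.cons_succ, expMonomial, expMonomialIndex,
    ← exp_nat_mul, ← exp_sum, Finset.sum_mul]
  congr 3 with j
  ring

noncomputable def expPolyCoeffs (P : MvPolynomial (Fin (n + 1)) ℝ) : (ℝ × ℕ) →₀ ℝ :=
  ∑ d ∈ P.support, Finsupp.single (expMonomialIndex r d) (P.coeff d)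

lemma eval_cons_exp_eq_expPoly (P : MvPolynomial (Fin (n + 1)) ℝ) (t : ℝ) :
    MvPolynomial.eval (Fin.cons t fun j => exp (r j * t)) P =
      expPoly (expPolyCoeffs r P) t := by
  rw [expPoly, expPolyCoeffs, map_sum, MvPolynomial.eval_eq']
  exact Finset.sum_congr rfl fun d _ => by
    rw [Finsupp.linearCombination_single, smul_eq_mul, prod_cons_exp_pow_eq_expMonomial]

end

theorem exp_poly_eventual_sign_trichotomy_general
    (n : ℕ) (P : MvPolynomial (Fin (n + 1)) ℝ)
    (r : Fin n → ℝ) :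
    ∃ T : ℝ,
      (∀ t > T, MvPolynomial.eval (Fin.cons t fun j => Real.exp (r j * t)) P = 0) ∨
      (∀ t > T, 0 < MvPolynomial.eval (Fin.cons t fun j => Real.exp (r j * t)) P) ∨
      (∀ t > T, MvPolynomial.eval (Fin.cons t fun j => Real.exp (r j * t)) P < 0) := by
  simp only [eval_cons_exp_eq_expPoly]
  rcases expPoly_eventually_trichotomy (expPolyCoeffs r P) with h | h | h <;>
    obtain ⟨T, hT⟩ := eventually_atTop.1 h
  exacts [⟨T, .inl fun t ht => hT t ht.le⟩, ⟨T, .inr (.inl fun t ht => hT t ht.le)⟩,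
    ⟨T, .inr (.inr fun t ht => hT t ht.le)⟩]

/-- Proposition 4: for a polynomial P in n+1 variables with real algebraic coefficients and
real algebraic numbers r₁,…,rₙ, the function t ↦ P(t, e^{r₁t},…,e^{rₙt}) is eventually
identically zero, eventually strictly positive, or eventually strictly negative. -/
theorem exp_poly_eventual_sign_trichotomy
    (n : ℕ) (P : MvPolynomial (Fin (n + 1)) ℝ)
    (hP : ∀ d, IsAlgebraic ℚ (MvPolynomial.coeff d P))
    (r : Fin n → ℝ) (hr : ∀ j, IsAlgebraic ℚ (r j)) :
    ∃ T : ℝ,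
      (∀ t > T, MvPolynomial.eval (Fin.cons t fun j => Real.exp (r j * t)) P = 0) ∨
      (∀ t > T, 0 < MvPolynomial.eval (Fin.cons t fun j => Real.exp (r j * t)) P) ∨
      (∀ t > T, MvPolynomial.eval (Fin.cons t fun j => Real.exp (r j * t)) P < 0) :=
  exp_poly_eventual_sign_trichotomy_general n P r
end

section
/- Let y : ℝ → ℝ be bounded and continuous on an interval (T_1, ∞), let Q_1, …, Q_m be nonzero univariate polynomials with real algebraic coefficients, and let β_1 > β_2 > … > β_m be real numbers. Suppose that Q_1(y(t))e^{β_1 t} + … + Q_m(y(t))e^{β_m t} = 0 for all t > T_1. Then there exist a root y* of Q_1 (in particular, y* is a real algebraic number), a constant ε > 0 and T_2 > T_1 such that |y(t) − y*| < e^{−ε t} for all t > T_2; in particular, lim_{t→∞} y(t) = y*. -/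
/-!
Dividing the identity by `exp (β₁ t)` shows `Q₁ (y t) = O(exp (-δ t))` for some `δ > 0`, because
every other term is a bounded factor times `exp ((βⱼ - β₁) t)`. Hence the bounded function `y`
approaches the finite root set of `Q₁`, and, being continuous, it cannot pass between disjoint
neighbourhoods of distinct roots, so it converges to one root `y*`. Writing
`Q₁ = (X - y*) ^ k * g` with `g (y*) ≠ 0` gives `|y t - y*| ^ k = O(exp (-δ t))`, which is the
exponential rate. Finally `y*` is algebraic because the coefficients of `Q₁` are.
-/

open Filter Topology Asymptotics Set Polynomial

theorem isAlgebraic_of_isRoot_of_isAlgebraic_coeff {K A : Type*} [Field K] [CommRing A]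
    [IsDomain A] [Algebra K A] {p : A[X]} (hp : p ≠ 0) (hcoeff : ∀ n, IsAlgebraic K (p.coeff n))
    {x : A} (hx : p.IsRoot x) : IsAlgebraic K x := by
  have hlifts : p ∈ lifts (algebraMap (integralClosure K A) A) :=
    (lifts_iff_coeff_lifts p).2 fun n => ⟨⟨p.coeff n, (hcoeff n).isIntegral⟩, rfl⟩
  obtain ⟨q, rfl⟩ := (mem_lifts p).1 hlifts
  refine IsAlgebraic.restrictScalars K (S := integralClosure K A) ⟨q, ?_, ?_⟩
  · rintro rfl
    exact hp (Polynomial.map_zero _)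
  · rwa [aeval_def, eval₂_eq_eval_map]

theorem eventually_mem_of_tendsto_comp {α X Y : Type*} [TopologicalSpace X] [TopologicalSpace Y]
    [T2Space Y] {f : X → Y} (hf : Continuous f) {K U : Set X} (hK : IsCompact K) (hU : IsOpen U)
    {c : Y} (hKU : K ∩ f ⁻¹' {c} ⊆ U) {l : Filter α} {y : α → X} (hyK : ∀ᶠ t in l, y t ∈ K)
    (hfy : Tendsto (f ∘ y) l (𝓝 c)) : ∀ᶠ t in l, y t ∈ U := by
  have hc : c ∉ f '' (K \ U) := fun ⟨x, ⟨hxK, hxU⟩, hfx⟩ => hxU (hKU ⟨hxK, hfx⟩)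
  filter_upwards [hfy (((hK.diff hU).image hf).isClosed.isOpen_compl.mem_nhds hc), hyK]
    with t hft hyt
  by_contra hyU
  exact hft ⟨y t, ⟨hyt, hyU⟩, rfl⟩

theorem exists_mem_fiber_tendsto_of_tendsto_comp {X Y : Type*} [TopologicalSpace X] [T2Space X]
    [TopologicalSpace Y] [T2Space Y] {f : X → Y} (hf : Continuous f) {K : Set X}
    (hK : IsCompact K) {c : Y} (hfin : (K ∩ f ⁻¹' {c}).Finite) {y : ℝ → X} {T : ℝ}
    (hy : ContinuousOn y (Ioi T)) (hyK : ∀ᶠ t in atTop, y t ∈ K)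
    (hfy : Tendsto (f ∘ y) atTop (𝓝 c)) : ∃ x ∈ K ∩ f ⁻¹' {c}, Tendsto y atTop (𝓝 x) := by
  set Z := K ∩ f ⁻¹' {c}
  obtain ⟨U, hU, hdisj⟩ := hfin.t2_separation
  have hUZ : ∀ᶠ t in atTop, y t ∈ ⋃ x ∈ Z, U x :=
    eventually_mem_of_tendsto_comp hf hK (isOpen_biUnion fun x _ => (hU x).2)
      (fun x hx => mem_biUnion hx (hU x).1) hyK hfy
  obtain ⟨T₀, hT₀⟩ := (hUZ.and (eventually_gt_atTop T)).exists_forall_of_atTop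
  obtain ⟨x, hxZ, hyx⟩ := mem_iUnion₂.1 (hT₀ T₀ le_rfl).1
  set V := ⋃ x' ∈ Z \ {x}, U x'
  have hV : IsOpen V := isOpen_biUnion fun x' _ => (hU x').2
  have hUV : Disjoint (U x) V :=
    disjoint_iUnion₂_right.2 fun x' hx' => hdisj hxZ hx'.1 (Ne.symm hx'.2)
  have hsplit : ∀ x' ∈ Z, x' = x ∨ U x' ⊆ V := fun x' hx' => or_iff_not_imp_left.2 fun hne =>
    subset_biUnion_of_mem (u := U) (⟨hx', hne⟩ : x' ∈ Z \ {x})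
  have htail : y '' Ici T₀ ⊆ U x := by
    have hpre : IsPreconnected (y '' Ici T₀) :=
      isPreconnected_Ici.image y (hy.mono fun t ht => (hT₀ t ht).2)
    refine hpre.subset_left_of_subset_union (hU x).2 hV hUV ?_
      ⟨y T₀, mem_image_of_mem y self_mem_Ici, hyx⟩
    rintro _ ⟨t, ht, rfl⟩
    obtain ⟨x', hx', hyx'⟩ := mem_iUnion₂.1 (hT₀ t ht).1
    exact (hsplit x' hx').imp (fun h : x' = x => h ▸ hyx') (· hyx')
  refine ⟨x, hxZ, tendsto_nhds.2 fun W hW hxW => ?_⟩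
  have hWV : ∀ᶠ t in atTop, y t ∈ W ∪ V := by
    refine eventually_mem_of_tendsto_comp hf hK (hW.union hV) (fun x' hx' => ?_) hyK hfy
    exact (hsplit x' hx').imp (fun h : x' = x => h ▸ hxW) (· (hU x').1)
  filter_upwards [hWV, eventually_ge_atTop T₀] with t hWVt ht
  exact hWVt.resolve_right (hUV.notMem_of_mem_left (htail (mem_image_of_mem y ht)))

theorem isBigO_one_comp_of_eventually_mem {α X E : Type*} [TopologicalSpace X]
    [NormedAddCommGroup E]
    {f : X → E} (hf : Continuous f) {K : Set X} (hK : IsCompact K) {l : Filter α} {y : α → X}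
    (hyK : ∀ᶠ t in l, y t ∈ K) : (f ∘ y) =O[l] (fun _ => (1 : ℝ)) := by
  obtain ⟨M, hM⟩ := hK.exists_bound_of_continuousOn hf.continuousOn
  exact IsBigO.of_bound M (hyK.mono fun t ht => by simpa using hM _ ht)

theorem isBigO_exp_neg_of_sum_mul_exp_eq_zero {ι : Type*} [Fintype ι] {f : ι → ℝ → ℝ}
    {β : ι → ℝ} {i₀ : ι} (hβ : ∀ j ≠ i₀, β j < β i₀)
    (hf : ∀ j ≠ i₀, f j =O[atTop] (fun _ => (1 : ℝ)))
    (hsum : ∀ᶠ t in atTop, ∑ j, f j t * Real.exp (β j * t) = 0) :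
    ∃ δ > 0, f i₀ =O[atTop] fun t => Real.exp (-δ * t) := by
  classical
  obtain ⟨δ, hδβ, hδ⟩ : ∃ δ, (∀ j ≠ i₀, β j + δ ≤ β i₀) ∧ 0 < δ := by
    refine ((eventually_all.2 fun j => ?_).and self_mem_nhdsWithin).exists (f := 𝓝[>] (0 : ℝ))
    by_cases hj : j = i₀
    · exact Eventually.of_forall fun _ h => absurd hj h
    · filter_upwards [nhdsWithin_le_nhds (Iio_mem_nhds (sub_pos.2 (hβ j hj)))] with δ hδ _
      linarith [mem_Iio.1 hδ]
  refine ⟨δ, hδ, ?_⟩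
  have hsolve : f i₀ =ᶠ[atTop]
      fun t => -∑ j ∈ Finset.univ.erase i₀, f j t * Real.exp ((β j - β i₀) * t) := by
    filter_upwards [hsum] with t ht
    rw [← Finset.add_sum_erase _ _ (Finset.mem_univ i₀)] at ht
    have he := Real.exp_pos (β i₀ * t)
    simp only [sub_mul, Real.exp_sub, ← mul_div_assoc, ← Finset.sum_div]
    rw [eq_neg_iff_add_eq_zero, ← mul_div_cancel_right₀ (f i₀ t) he.ne', ← add_div, ht,
      zero_div]
  have hexp : ∀ j ≠ i₀,
      (fun t => Real.exp ((β j - β i₀) * t)) =O[atTop] fun t => Real.exp (-δ * t) := by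
    intro j hj
    refine IsBigO.of_bound 1 ((eventually_ge_atTop 0).mono fun t ht => ?_)
    simp only [Real.norm_eq_abs, Real.abs_exp, one_mul, Real.exp_le_exp]
    nlinarith [hδβ j hj]
  refine (IsBigO.fun_sum fun j hj => ?_).neg_left.congr' hsolve.symm EventuallyEq.rfl
  have hj := Finset.ne_of_mem_erase hj
  simpa using (hf j hj).mul (hexp j hj)

theorem Polynomial.isBigO_sub_pow_rootMultiplicity {α 𝕜 : Type*} [NormedField 𝕜] {p : 𝕜[X]}
    (hp : p ≠ 0) {r : 𝕜} {l : Filter α} {y : α → 𝕜} (hy : Tendsto y l (𝓝 r)) :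
    (fun t => (y t - r) ^ p.rootMultiplicity r) =O[l] fun t => p.eval (y t) := by
  set g := p /ₘ (X - C r) ^ p.rootMultiplicity r
  have hg : Tendsto (fun t => g.eval (y t)) l (𝓝 (g.eval r)) :=
    (g.continuous.tendsto r).comp hy
  have hgr : g.eval r ≠ 0 := eval_divByMonic_pow_rootMultiplicity_ne_zero r hp
  have hfactor : (fun t => p.eval (y t) * (g.eval (y t))⁻¹) =ᶠ[l]
      fun t => (y t - r) ^ p.rootMultiplicity r := by
    filter_upwards [hg.eventually_ne hgr] with t ht
    conv_lhs => rw [← pow_mul_divByMonic_rootMultiplicity_eq p r]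
    simp [g, ht]
  exact ((isBigO_refl (fun t => p.eval (y t)) l).mul ((hg.inv₀ hgr).isBigO_one 𝕜)).congr' hfactor
    (.of_forall fun _ => mul_one _)

theorem exists_pos_eventually_abs_lt_exp_of_pow_isBigO {u : ℝ → ℝ} {k : ℕ} (hk : k ≠ 0)
    {δ : ℝ} (hδ : 0 < δ) (hu : (fun t => u t ^ k) =O[atTop] fun t => Real.exp (-δ * t)) :
    ∃ ε > 0, ∀ᶠ t in atTop, |u t| < Real.exp (-ε * t) := by
  have hk' : (0 : ℝ) < k := Nat.cast_pos.2 (Nat.pos_of_ne_zero hk)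
  refine ⟨δ / (2 * k), by positivity, ?_⟩
  -- `exp (-ε t) ^ k = exp (-δ t / 2)` for the chosen `ε`
  have hlittle : (fun t => Real.exp (-δ * t)) =o[atTop] fun t => Real.exp (-(δ / 2) * t) := by
    refine Real.isLittleO_exp_comp_exp_comp.2 ?_
    have : Tendsto (fun t : ℝ => δ / 2 * t) atTop atTop :=
      tendsto_id.const_mul_atTop (half_pos hδ)
    exact this.congr fun t => by ring
  filter_upwards [(hu.trans_isLittleO hlittle).def one_half_pos] with t ht
  refine lt_of_pow_lt_pow_left₀ k (Real.exp_pos _).le ?_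
  have hexponent : k * (-(δ / (2 * k)) * t) = -(δ / 2) * t := by field_simp
  rw [← Real.exp_nat_mul, hexponent, ← abs_pow]
  rw [Real.norm_eq_abs, Real.norm_eq_abs, Real.abs_exp] at ht
  linarith [Real.exp_pos (-(δ / 2) * t)]

/-- Lemma 5 (convergence): if y is bounded and continuous on (T₁,∞), the Q_j are nonzero
polynomials with real algebraic coefficients, β₁ > … > β_m, and
Q₁(y(t))e^{β₁t} + … + Q_m(y(t))e^{β_m t} = 0 for all t > T₁, then y(t) converges
exponentially fast to some root y* of Q₁, which is a real algebraic number. -/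
theorem bounded_solution_converges_to_algebraic_root
    (T₁ : ℝ) (y : ℝ → ℝ)
    (hbdd : ∃ B : ℝ, ∀ t > T₁, |y t| ≤ B)
    (hcont : ContinuousOn y (Set.Ioi T₁))
    (m : ℕ) (hm : 0 < m) (Q : Fin m → Polynomial ℝ) (hQ : ∀ j, Q j ≠ 0)
    (hQalg : ∀ j k, IsAlgebraic ℚ ((Q j).coeff k))
    (β : Fin m → ℝ) (hβ : StrictAnti β)
    (heq : ∀ t > T₁, (∑ j, (Q j).eval (y t) * Real.exp (β j * t)) = 0) :
    ∃ ystar : ℝ, (Q ⟨0, hm⟩).eval ystar = 0 ∧ IsAlgebraic ℚ ystar ∧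
      (∃ ε > 0, ∃ T₂ > T₁, ∀ t > T₂, |y t - ystar| < Real.exp (-ε * t)) ∧
      Filter.Tendsto y Filter.atTop (nhds ystar) := by
  obtain ⟨B, hB⟩ := hbdd
  set P := Q ⟨0, hm⟩
  have hyB : ∀ᶠ t in atTop, y t ∈ Metric.closedBall 0 B :=
    (eventually_gt_atTop T₁).mono fun t ht => mem_closedBall_zero_iff.2 (hB t ht)
  obtain ⟨δ, hδ, hPy⟩ := isBigO_exp_neg_of_sum_mul_exp_eq_zero (f := fun j t => (Q j).eval (y t))
    (i₀ := ⟨0, hm⟩)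
    (fun j hj => hβ (Fin.lt_def.2 (Nat.pos_of_ne_zero fun h => hj (Fin.ext h))))
    (fun j _ => isBigO_one_comp_of_eventually_mem (Q j).continuous (isCompact_closedBall 0 B) hyB)
    ((eventually_gt_atTop T₁).mono heq)
  have hPy0 : Tendsto (fun t => P.eval (y t)) atTop (𝓝 0) :=
    hPy.trans_tendsto <| Real.tendsto_exp_atBot.comp <|
      tendsto_id.const_mul_atTop_of_neg (neg_neg_of_pos hδ)
  obtain ⟨r, ⟨-, hr⟩, hyr⟩ := exists_mem_fiber_tendsto_of_tendsto_comp P.continuous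
    (isCompact_closedBall 0 B) ((P.finite_setOfPred_isRoot (hQ _)).subset fun x hx => hx.2) hcont
    hyB hPy0
  obtain ⟨ε, hε, hrate⟩ := exists_pos_eventually_abs_lt_exp_of_pow_isBigO
    ((rootMultiplicity_pos (hQ _)).2 hr).ne' hδ
    ((P.isBigO_sub_pow_rootMultiplicity (hQ _) hyr).trans hPy)
  obtain ⟨T, hT⟩ := hrate.exists_forall_of_atTop
  refine ⟨r, hr, isAlgebraic_of_isRoot_of_isAlgebraic_coeff (hQ _) (hQalg _) hr,
    ⟨ε, hε, max T T₁ + 1, by linarith [le_max_right T T₁], fun t ht => hT t ?_⟩, hyr⟩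
  linarith [le_max_left T T₁]
end

section
/- Fix real algebraic numbers a, c with a, c > 0 and a rational ε ∈ (0, 1), and let f(t) = e^t(1 − cos t) + t(1 − cos(at)) − c·|sin(at)|. Then there exists a threshold T (depending on a, c, ε) such that if f(t) = 0 for some t ≥ T, then L(a) ≤ c/(2π²(1 − ε)). -/
open Real

/-- The homogeneous Diophantine approximation type of a real number a:
L(a) = inf { c ∈ ℝ : |a − n/m| < c/m² for some integers m, n with m ≥ 1 }. -/
noncomputable def diophType (a : ℝ) : ℝ :=
  sInf { c : ℝ | ∃ m n : ℤ, 1 ≤ m ∧ |a - (n : ℝ) / (m : ℝ)| < c / (m : ℝ) ^ 2 }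

/-- Jordan-type inequality: `(1 - cos x) π² ≥ 2 x²` for `|x| ≤ π`. -/
lemma jordan_one_sub_cos {x : ℝ} (hx : |x| ≤ π) : 2 * x ^ 2 ≤ (1 - Real.cos x) * π ^ 2 := by
  have hπ : 0 < π := Real.pi_pos
  have h := Real.cos_le_one_sub_mul_cos_sq hx
  have h1 : 2 / π ^ 2 * x ^ 2 ≤ 1 - Real.cos x := by linarith
  have h2 := mul_le_mul_of_nonneg_right h1 (sq_nonneg π)
  have h3 : 2 / π ^ 2 * x ^ 2 * π ^ 2 = 2 * x ^ 2 := by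
    field_simp
  linarith

set_option maxHeartbeats 1000000 in
/-- Lemma 6: there is an effective threshold T such that if
f(t) = e^t(1 − cos t) + t(1 − cos(at)) − c|sin(at)| vanishes at some t ≥ T,
then L(a) ≤ c/(2π²(1 − ε)). -/
theorem zero_at_large_time_bounds_diophType
    (a c : ℝ) (ha : IsAlgebraic ℚ a) (hc : IsAlgebraic ℚ c)
    (hapos : 0 < a) (hcpos : 0 < c)
    (ε : ℚ) (hε0 : 0 < ε) (hε1 : ε < 1)
    (f : ℝ → ℝ)
    (hf : ∀ t, f t = Real.exp t * (1 - Real.cos t) + t * (1 - Real.cos (a * t))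
        - c * |Real.sin (a * t)|) :
    ∃ T : ℝ, ∀ t ≥ T, f t = 0 → diophType a ≤ c / (2 * π ^ 2 * (1 - (ε : ℝ))) := by
  have he0 : (0:ℝ) < (ε:ℝ) := by exact_mod_cast hε0
  have he1 : (ε:ℝ) < 1 := by exact_mod_cast hε1
  have hπ : 0 < π := Real.pi_pos
  have hπ3 : π < 3.15 := Real.pi_lt_d2
  have hπ3' : 3.14 < π := by linarith [Real.pi_gt_d6]
  set B := c / (2 * π ^ 2 * (1 - (ε : ℝ))) with hB
  have hX : (0:ℝ) < 1 - (ε:ℝ)/4 := by linarith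
  have h1e : (0:ℝ) < 1 - (ε:ℝ) := by linarith
  set η := min 1 (Real.sqrt ((ε:ℝ)/10)) with hηdef
  have hη0 : 0 < η := lt_min one_pos (Real.sqrt_pos.2 (by linarith))
  have hη1 : η ≤ 1 := min_le_left _ _
  have hη2 : η ^ 2 ≤ (ε:ℝ)/10 := by
    have h := min_le_right 1 (Real.sqrt ((ε:ℝ)/10))
    calc η ^ 2 ≤ (Real.sqrt ((ε:ℝ)/10)) ^ 2 := by
          apply pow_le_pow_left₀ hη0.le h
      _ = (ε:ℝ)/10 := Real.sq_sqrt (by positivity)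
  set γ := c / (π * (1 - (ε:ℝ))) - c / (π * (1 - (ε:ℝ)/4)) with hγdef
  have hγ0 : 0 < γ := by
    rw [hγdef]
    have := div_lt_div_of_pos_left hcpos (by positivity : 0 < π * (1 - (ε:ℝ)))
      (by nlinarith : π * (1 - (ε:ℝ)) < π * (1 - (ε:ℝ)/4))
    linarith
  refine ⟨max 10 (max (c*π^2/(2*η)) (max (2*c/(γ*(1-(ε:ℝ)/4)) + 1)
    (512*c*π^2*a^2/γ^2))), ?_⟩
  intro t ht hft
  have ht10 : 10 ≤ t := le_trans (le_max_left _ _) ht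
  have ht2 : c*π^2/(2*η) ≤ t :=
    le_trans (le_trans (le_max_left _ _) (le_max_right _ _)) ht
  have ht3 : 2*c/(γ*(1-(ε:ℝ)/4)) + 1 ≤ t :=
    le_trans (le_trans (le_trans (le_max_left _ _) (le_max_right _ _)) (le_max_right _ _)) ht
  have ht4 : 512*c*π^2*a^2/γ^2 ≤ t :=
    le_trans (le_trans (le_trans (le_max_right _ _) (le_max_right _ _)) (le_max_right _ _)) ht
  have ht0 : 0 < t := by linarith only [ht10]
  -- the equation
  have heq : Real.exp t * (1 - Real.cos t) + t * (1 - Real.cos (a*t))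
      = c * |Real.sin (a*t)| := by
    have h := hf t
    rw [hft] at h
    linarith only [h]
  -- nearest multiples of 2π
  set n := round (a*t/(2*π)) with hn
  set k := round (t/(2*π)) with hk
  set d := a*t - 2*π*(n:ℝ) with hd
  set δ := t - 2*π*(k:ℝ) with hδdef
  have habs : ∀ x:ℝ, |x - 2*π*((round (x/(2*π)) : ℤ):ℝ)| ≤ π := by
    intro x
    have h := abs_sub_round (x/(2*π))
    have hx : x - 2*π*((round (x/(2*π)) : ℤ):ℝ)
        = (2*π) * (x/(2*π) - ((round (x/(2*π)) : ℤ):ℝ)) := by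
      field_simp
    rw [hx, abs_mul, abs_of_pos (by positivity : (0:ℝ) < 2*π)]
    calc 2*π*|x/(2*π) - ((round (x/(2*π)) : ℤ):ℝ)| ≤ 2*π*(1/2) := by
          apply mul_le_mul_of_nonneg_left h (by positivity)
      _ = π := by ring
  have hdπ : |d| ≤ π := by rw [hd, hn]; exact habs (a*t)
  have hδπ : |δ| ≤ π := by rw [hδdef, hk]; exact habs t
  have hcosat : Real.cos (a*t) = Real.cos d := by
    have hx : a*t = d + (n:ℝ)*(2*π) := by rw [hd]; ring
    rw [hx, Real.cos_add_int_mul_two_pi]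
  have hsinat : Real.sin (a*t) = Real.sin d := by
    have hx : a*t = d + (n:ℝ)*(2*π) := by rw [hd]; ring
    rw [hx, Real.sin_add_int_mul_two_pi]
  have hcost : Real.cos t = Real.cos δ := by
    have hx : t = δ + (k:ℝ)*(2*π) := by rw [hδdef]; ring
    rw [hx, Real.cos_add_int_mul_two_pi]
  rw [hcosat, hsinat, hcost] at heq
  clear_value n k d δ
  -- basic positivity facts
  have hc1 : 0 ≤ 1 - Real.cos d := by linarith only [Real.cos_le_one d]
  have hc2 : 0 ≤ 1 - Real.cos δ := by linarith only [Real.cos_le_one δ]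
  have hskd : |Real.sin d| ≤ 1 := Real.abs_sin_le_one d
  have hexp0 : 0 < Real.exp t := Real.exp_pos t
  have hE : Real.exp t * (1 - Real.cos δ) ≤ c := by
    have h1 : c * |Real.sin d| ≤ c * 1 := mul_le_mul_of_nonneg_left hskd hcpos.le
    linarith only [heq, h1, mul_nonneg ht0.le hc1]
  have hDineq : t * (1 - Real.cos d) ≤ c * |Real.sin d| := by
    linarith only [heq, mul_nonneg hexp0.le hc2]
  -- Jordan bounds
  have hJd : 2*d^2 ≤ (1 - Real.cos d)*π^2 := jordan_one_sub_cos hdπ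
  have hJδ : 2*δ^2 ≤ (1 - Real.cos δ)*π^2 := jordan_one_sub_cos hδπ
  have hsd : |Real.sin d| ≤ |d| := Real.abs_sin_le_abs
  -- crude bound on |d|
  have hDd : t * (1 - Real.cos d) ≤ c * |d| :=
    le_trans hDineq (mul_le_mul_of_nonneg_left hsd hcpos.le)
  have h1crude : t*(2*d^2) ≤ c*|d| *π^2 := by
    calc t*(2*d^2) ≤ t*((1 - Real.cos d)*π^2) := mul_le_mul_of_nonneg_left hJd ht0.le
      _ = (t*(1 - Real.cos d))*π^2 := by ring
      _ ≤ (c*|d|)*π^2 := mul_le_mul_of_nonneg_right hDd (sq_nonneg π)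
      _ = c*|d| *π^2 := by ring
  have hdcrude : |d| * (2*t) ≤ c*π^2 := by
    rcases (abs_nonneg d).eq_or_lt with h0 | h0
    · calc |d| * (2*t) = 0 * (2*t) := by rw [← h0]
        _ = 0 := by ring
        _ ≤ c*π^2 := by positivity
    · have h2 : (|d| * (2*t)) * |d| ≤ (c*π^2) * |d| := by
        calc (|d| * (2*t)) * |d| = t*(2*|d|^2) := by ring
          _ = t*(2*d^2) := by rw [sq_abs]
          _ ≤ c*|d| *π^2 := h1crude
          _ = (c*π^2) * |d| := by ring
      exact le_of_mul_le_mul_right h2 h0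
  have hdη : |d| ≤ η := by
    have h1 : c*π^2 ≤ 2*η*t := by
      rw [div_le_iff₀ (by positivity)] at ht2
      linarith only [ht2]
    have h2 : |d| * (2*t) ≤ η * (2*t) := by linarith only [hdcrude, h1]
    exact le_of_mul_le_mul_right h2 (by linarith only [ht0])
  have hd1 : |d| ≤ 1 := le_trans hdη hη1
  -- sharp bound on |d|
  have hd2η : d^2 ≤ η^2 := by
    have := pow_le_pow_left₀ (abs_nonneg d) hdη 2
    rwa [sq_abs] at this
  have h5 : (d^2)^2 ≤ ((ε:ℝ)/10) * d^2 := by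
    calc (d^2)^2 = d^2*d^2 := by ring
      _ ≤ η^2*d^2 := mul_le_mul_of_nonneg_right hd2η (sq_nonneg d)
      _ ≤ ((ε:ℝ)/10)*d^2 := mul_le_mul_of_nonneg_right hη2 (sq_nonneg d)
  have hcb := Real.cos_bound hd1
  have hcb' : Real.cos d - (1 - d^2/2) ≤ (d^2)^2 * (5/96) := by
    have habs4 : |d|^4 = (d^2)^2 := by rw [← sq_abs d]; ring
    rw [← habs4]
    exact (abs_le.1 hcb).2
  have h2s : d^2/2*(1-(ε:ℝ)/4) ≤ 1 - Real.cos d := by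
    linarith only [hcb', h5, mul_nonneg he0.le (sq_nonneg d)]
  have hsharp : t * (d^2/2*(1-(ε:ℝ)/4)) ≤ c * |d| := by
    calc t * (d^2/2*(1-(ε:ℝ)/4)) ≤ t * (1 - Real.cos d) :=
          mul_le_mul_of_nonneg_left h2s ht0.le
      _ ≤ c * |d| := hDd
  have hdfine : |d| * (t * (1-(ε:ℝ)/4)) ≤ 2*c := by
    rcases (abs_nonneg d).eq_or_lt with h0 | h0
    · calc |d| * (t * (1-(ε:ℝ)/4)) = 0 * (t * (1-(ε:ℝ)/4)) := by rw [← h0]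
        _ = 0 := by ring
        _ ≤ 2*c := by positivity
    · have h3 : (|d| * (t*(1-(ε:ℝ)/4))) * |d| ≤ (2*c) * |d| := by
        calc (|d| * (t*(1-(ε:ℝ)/4))) * |d| = t * (|d|^2/2*(1-(ε:ℝ)/4)) * 2 := by ring
          _ = t * (d^2/2*(1-(ε:ℝ)/4)) * 2 := by rw [sq_abs]
          _ ≤ (c*|d|)*2 := by linarith only [hsharp]
          _ = (2*c) * |d| := by ring
      exact le_of_mul_le_mul_right h3 h0
  -- bound on |δ|
  have hexpt : t^4/256 ≤ Real.exp t := by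
    have h4 : Real.exp t = (Real.exp (t/4))^4 := by
      have h := Real.exp_nat_mul (t/4) 4
      have h44 : ((4:ℕ):ℝ) * (t/4) = t := by push_cast; ring
      rw [h44] at h
      exact h
    have hle : t/4 ≤ Real.exp (t/4) := by linarith only [Real.add_one_le_exp (t/4)]
    calc t^4/256 = (t/4)^4 := by ring
      _ ≤ (Real.exp (t/4))^4 := pow_le_pow_left₀ (by linarith only [ht0]) hle 4
      _ = Real.exp t := h4.symm
  have hδ2exp : Real.exp t * (2*δ^2) ≤ c*π^2 := by
    calc Real.exp t * (2*δ^2) ≤ Real.exp t * ((1 - Real.cos δ)*π^2) :=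
          mul_le_mul_of_nonneg_left hJδ hexp0.le
      _ = (Real.exp t * (1 - Real.cos δ))*π^2 := by ring
      _ ≤ c*π^2 := mul_le_mul_of_nonneg_right hE (sq_nonneg π)
  have hδ2' : δ^2 * t^4 ≤ 128*c*π^2 := by
    have h1 : (2*δ^2) * (t^4/256) ≤ (2*δ^2) * Real.exp t :=
      mul_le_mul_of_nonneg_left hexpt (by positivity)
    linarith only [h1, hδ2exp]
  have ht2sq : 512*c*π^2*a^2 ≤ γ^2 * t^2 := by
    have h1 : 512*c*π^2*a^2 ≤ γ^2 * t := by
      rw [div_le_iff₀ (by positivity)] at ht4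
      linarith only [ht4]
    have h2 : (0:ℝ) ≤ γ^2*t*(t-1) :=
      mul_nonneg (mul_nonneg (sq_nonneg γ) ht0.le) (by linarith only [ht10])
    linarith only [h1, h2]
  have hδle : |δ| ≤ γ/(2*a*t) := by
    have h3 : δ^2*t^4*(4*a^2) ≤ γ^2*t^2 := by
      have := mul_le_mul_of_nonneg_right hδ2' (by positivity : (0:ℝ) ≤ 4*a^2)
      calc δ^2*t^4*(4*a^2) ≤ (128*c*π^2)*(4*a^2) := this
        _ = 512*c*π^2*a^2 := by ring
        _ ≤ γ^2*t^2 := ht2sq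
    have h4 : (δ^2*(4*a^2*t^2))*t^2 ≤ (γ^2)*t^2 := by
      calc (δ^2*(4*a^2*t^2))*t^2 = δ^2*t^4*(4*a^2) := by ring
        _ ≤ γ^2*t^2 := h3
    have h5' : δ^2*(4*a^2*t^2) ≤ γ^2 := le_of_mul_le_mul_right h4 (by positivity)
    have h2 : δ^2 ≤ (γ/(2*a*t))^2 := by
      rw [show (γ/(2*a*t))^2 = γ^2/((2*a*t)^2) by rw [div_pow],
        le_div_iff₀ (by positivity : (0:ℝ) < (2*a*t)^2)]
      calc δ^2*(2*a*t)^2 = δ^2*(4*a^2*t^2) := by ring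
        _ ≤ γ^2 := h5'
    calc |δ| = Real.sqrt (δ^2) := (Real.sqrt_sq_eq_abs δ).symm
      _ ≤ Real.sqrt ((γ/(2*a*t))^2) := Real.sqrt_le_sqrt h2
      _ = γ/(2*a*t) := Real.sqrt_sq (by positivity)
  -- bounds on k
  have hkabs := abs_le.1 hδπ
  have hkup : 2*π*(k:ℝ) ≤ t + π := by
    have h := hkabs.1
    rw [hδdef] at h
    linarith only [h]
  have hklow : t - π ≤ 2*π*(k:ℝ) := by
    have h := hkabs.2
    rw [hδdef] at h
    linarith only [h]
  have hkR0 : (0:ℝ) < (k:ℝ) := by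
    nlinarith only [hklow, ht10, hπ3, hπ]
  have hk1' : 1 ≤ k := by exact_mod_cast hkR0
  have hk1 : (1:ℝ) ≤ (k:ℝ) := by exact_mod_cast hk1'
  have hkt : (k:ℝ) ≤ t := by
    have h6 : 6.28*(k:ℝ) ≤ 2*π*(k:ℝ) := by nlinarith only [hπ3', hk1]
    linarith only [h6, hkup, ht10, hπ3]
  -- the key sum estimate
  have hsum : (k:ℝ) * (|d| + a*|δ|) < c/(π*(1-(ε:ℝ))) := by
    have hdle : |d| ≤ 2*c/(t*(1-(ε:ℝ)/4)) := by
      rw [le_div_iff₀ (by positivity)]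
      linarith only [hdfine]
    have hkd : (k:ℝ)*|d| ≤ c/(π*(1-(ε:ℝ)/4)) + c/(t*(1-(ε:ℝ)/4)) := by
      have hk' : (k:ℝ) ≤ (t+π)/(2*π) := by
        rw [le_div_iff₀ (by positivity)]
        linarith only [hkup]
      have key : ∀ X : ℝ, 0 < X → |d| ≤ 2*c/(t*X) → (k:ℝ)*|d| ≤ c/(π*X) + c/(t*X) := by
        intro X hX0 hdle'
        calc (k:ℝ)*|d| ≤ ((t+π)/(2*π)) * (2*c/(t*X)) :=
              mul_le_mul hk' hdle' (abs_nonneg d) (by positivity)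
          _ = c/(π*X) + c/(t*X) := by
              field_simp
      exact key _ hX hdle
    have hsmall : c/(t*(1-(ε:ℝ)/4)) < γ/2 := by
      rw [div_lt_iff₀ (by positivity)]
      have h1 : 2*c/(γ*(1-(ε:ℝ)/4)) ≤ t - 1 := by linarith only [ht3]
      rw [div_le_iff₀ (by positivity)] at h1
      linarith only [h1, mul_pos hγ0 hX]
    have hkδ : (k:ℝ)*(a*|δ|) ≤ γ/2 := by
      have h1 : a*|δ| ≤ γ/(2*t) := by
        calc a*|δ| ≤ a*(γ/(2*a*t)) := mul_le_mul_of_nonneg_left hδle hapos.le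
          _ = γ/(2*t) := by
              rw [mul_div_assoc']
              rw [show a*γ/(2*a*t) = γ/(2*t) * (a/a) by ring]
              rw [div_self hapos.ne', mul_one]
      calc (k:ℝ)*(a*|δ|) ≤ t*(γ/(2*t)) :=
            mul_le_mul hkt h1 (by positivity) ht0.le
        _ = γ/2 := by
          rw [mul_div_assoc']
          rw [show t*γ/(2*t) = γ/2 * (t/t) by ring, div_self ht0.ne', mul_one]
    have hfin : c/(π*(1-(ε:ℝ)/4)) + γ = c/(π*(1-(ε:ℝ))) := by rw [hγdef]; ring
    calc (k:ℝ)*(|d| + a*|δ|) = (k:ℝ)*|d| + (k:ℝ)*(a*|δ|) := by ring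
      _ < (c/(π*(1-(ε:ℝ)/4)) + γ/2) + γ/2 := by
          have h7 : (k:ℝ)*|d| < c/(π*(1-(ε:ℝ)/4)) + γ/2 := by linarith only [hkd, hsmall]
          linarith only [h7, hkδ]
      _ = c/(π*(1-(ε:ℝ))) := by linarith only [hfin]
  -- membership in the defining set
  have hkne : ((k:ℤ):ℝ) ≠ 0 := hkR0.ne'
  have hmem : B ∈ {c' : ℝ | ∃ m n : ℤ, 1 ≤ m ∧ |a - (n:ℝ)/(m:ℝ)| < c'/(m:ℝ)^2} := by
    refine ⟨k, n, hk1', ?_⟩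
    have heqd : a - (n:ℝ)/(k:ℝ) = (d - a*δ)/(2*π*(k:ℝ)) := by
      rw [hd, hδdef]
      field_simp
      ring
    rw [heqd, abs_div, abs_of_pos (by positivity : (0:ℝ) < 2*π*(k:ℝ))]
    rw [div_lt_div_iff₀ (by positivity) (by positivity : (0:ℝ) < ((k:ℤ):ℝ)^2)]
    have habs2 : |d - a*δ| ≤ |d| + a*|δ| := by
      calc |d - a*δ| = |d + (-(a*δ))| := by ring_nf
        _ ≤ |d| + |(-(a*δ))| := abs_add_le _ _
        _ = |d| + a*|δ| := by rw [abs_neg, abs_mul, abs_of_pos hapos]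
    have h2πB : B * (2*π*(k:ℝ)) = (k:ℝ) * (c/(π*(1-(ε:ℝ)))) := by
      rw [hB]
      field_simp
    calc |d - a*δ| * ((k:ℝ))^2 ≤ (|d| + a*|δ|) * ((k:ℝ))^2 :=
          mul_le_mul_of_nonneg_right habs2 (by positivity)
      _ = (k:ℝ) * ((k:ℝ)*(|d| + a*|δ|)) := by ring
      _ < (k:ℝ) * (c/(π*(1-(ε:ℝ)))) := mul_lt_mul_of_pos_left hsum hkR0
      _ = B * (2*π*(k:ℝ)) := h2πB.symm
  -- conclude via csInf
  have hbdd : BddBelow {c' : ℝ | ∃ m n : ℤ, 1 ≤ m ∧ |a - (n:ℝ)/(m:ℝ)| < c'/(m:ℝ)^2} := by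
    refine ⟨0, fun x hx => ?_⟩
    obtain ⟨m, nn, hm, hlt⟩ := hx
    have hm1 : (1:ℝ) ≤ (m:ℝ) := by exact_mod_cast hm
    have hm0 : (0:ℝ) < (m:ℝ)^2 := by positivity
    have h0 : (0:ℝ) < x/(m:ℝ)^2 := lt_of_le_of_lt (abs_nonneg _) hlt
    rcases div_pos_iff.1 h0 with ⟨hx0, _⟩ | ⟨_, hneg⟩
    · exact hx0.le
    · linarith only [hm0, hneg]
  unfold diophType
  exact csInf_le hbdd hmem
end

section
/- Fix real algebraic numbers a, c with a, c > 0 and a rational ε ∈ (0, 1), and let f(t) = e^t(1 − cos t) + t(1 − cos(at)) − c·|sin(at)|. Then there exists a threshold M (depending on a, c, ε) such that if there exist natural numbers n, m with m ≥ M and |a − n/m| ≤ c(1 − ε)/(2π² m²), then f(t) = 0 for some t ≥ 2πM. -/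
/-!
At `t = 2πm` the exponential term vanishes and `a t` lies within `δ = 2π(ma - n)` of a multiple
of `2π`, where the approximation gives `π m |δ| ≤ c (1 - ε)`. Hence
`t (1 - cos δ) ≤ π m δ² ≤ c (1 - ε) |δ| ≤ c |sin δ|` once `δ² ≤ 6ε`, so `f (2πm) ≤ 0`, while
`f (2πm + π) ≥ 2 eᵗ - c > 0`; the intermediate value theorem gives a zero in between.
-/

open Real

noncomputable def expCosSin (a c t : ℝ) : ℝ :=
  exp t * (1 - cos t) + t * (1 - cos (a * t)) - c * |sin (a * t)|

theorem continuous_expCosSin (a c : ℝ) : Continuous (expCosSin a c) := by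
  unfold expCosSin; fun_prop

theorem expCosSin_pos_of_cos_eq_neg_one {a c t : ℝ} (ht : 0 ≤ t) (hct : c ≤ t)
    (hcos : cos t = -1) : 0 < expCosSin a c t := by
  have hexp : t + 1 ≤ exp t := add_one_le_exp t
  have hsin : c * |sin (a * t)| ≤ t := by
    rcases le_total 0 c with hc | hc
    · nlinarith [abs_sin_le_one (a * t), abs_nonneg (sin (a * t))]
    · nlinarith [abs_nonneg (sin (a * t))]
  have hcos' : 0 ≤ t * (1 - cos (a * t)) := mul_nonneg ht (by linarith [cos_le_one (a * t)])
  rw [expCosSin, hcos]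
  linarith

theorem sub_cube_div_six_le_abs_sin (x : ℝ) : |x| - |x| ^ 3 / 6 ≤ |sin x| := by
  have habs : |sin (|x|)| = |sin x| := by
    rcases abs_cases x with ⟨h, -⟩ | ⟨h, -⟩ <;> simp [h, sin_neg]
  calc |x| - |x| ^ 3 / 6 ≤ sin |x| := sin_ge_sub_cube (abs_nonneg x)
    _ ≤ |sin x| := habs ▸ le_abs_self _

theorem mul_one_sub_cos_le_mul_abs_sin {t c ε δ : ℝ} (ht : 0 ≤ t) (hc : 0 ≤ c)
    (hδε : δ ^ 2 ≤ 6 * ε) (htδ : t * |δ| ≤ 2 * c * (1 - ε)) :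
    t * (1 - cos δ) ≤ c * |sin δ| := by
  have hcos : 1 - cos δ ≤ δ ^ 2 / 2 := by linarith [one_sub_sq_div_two_le_cos (x := δ)]
  have hcube : |δ| ^ 3 ≤ 6 * ε * |δ| := by
    rw [show |δ| ^ 3 = δ ^ 2 * |δ| by rw [← sq_abs]; ring]
    exact mul_le_mul_of_nonneg_right hδε (abs_nonneg δ)
  calc t * (1 - cos δ) ≤ t * (δ ^ 2 / 2) := mul_le_mul_of_nonneg_left hcos ht
    _ = t * |δ| * |δ| / 2 := by rw [← sq_abs]; ring
    _ ≤ 2 * c * (1 - ε) * |δ| / 2 := by gcongr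
    _ ≤ c * (|δ| - |δ| ^ 3 / 6) := by nlinarith
    _ ≤ c * |sin δ| := mul_le_mul_of_nonneg_left (sub_cube_div_six_le_abs_sin δ) hc

theorem expCosSin_nat_mul_two_pi (a c : ℝ) (m n : ℕ) :
    expCosSin a c (m * (2 * π)) =
      m * (2 * π) * (1 - cos (a * (m * (2 * π)) - n * (2 * π)))
        - c * |sin (a * (m * (2 * π)) - n * (2 * π))| := by
  rw [expCosSin, cos_sub_nat_mul_two_pi, sin_sub_nat_mul_two_pi, cos_nat_mul_two_pi]
  ring

theorem pi_mul_abs_sub_nat_mul_two_pi_le {a K : ℝ} {m n : ℕ} (hm : 0 < m)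
    (h : |a - n / m| ≤ K / (2 * π ^ 2 * (m : ℝ) ^ 2)) :
    π * m * |a * (m * (2 * π)) - n * (2 * π)| ≤ K := by
  have hmR : (0 : ℝ) < m := Nat.cast_pos.mpr hm
  have hphase : a * (m * (2 * π)) - n * (2 * π) = m * (2 * π) * (a - n / m) := by
    field_simp
  rw [hphase, abs_mul, abs_of_pos (by positivity)]
  calc π * m * (m * (2 * π) * |a - n / m|) = 2 * π ^ 2 * (m : ℝ) ^ 2 * |a - n / m| := by ring
    _ ≤ 2 * π ^ 2 * (m : ℝ) ^ 2 * (K / (2 * π ^ 2 * (m : ℝ) ^ 2)) := by gcongr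
    _ = K := by field_simp

theorem sq_le_of_mul_abs_le {m c ε δ : ℝ} (hm : 1 ≤ m) (hmδ : m * |δ| ≤ c)
    (hcm : c ^ 2 ≤ ε * m) : δ ^ 2 ≤ ε := by
  have hsq : (m * |δ|) ^ 2 ≤ c ^ 2 := pow_le_pow_left₀ (by positivity) hmδ 2
  rw [mul_pow, sq_abs] at hsq
  have hmδ2 : m * δ ^ 2 ≤ ε := le_of_mul_le_mul_left (by nlinarith) (by positivity : 0 < m)
  exact (le_mul_of_one_le_left (sq_nonneg δ) hm).trans hmδ2

theorem good_approximation_forces_zero_general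
    (a c : ℝ)
    (hcpos : 0 < c)
    (ε : ℚ) (hε0 : 0 < ε)
    (f : ℝ → ℝ)
    (hf : ∀ t, f t = Real.exp t * (1 - Real.cos t) + t * (1 - Real.cos (a * t))
        - c * |Real.sin (a * t)|) :
    ∃ M : ℕ,
      (∃ n m : ℕ, M ≤ m ∧
        |a - (n : ℝ) / (m : ℝ)| ≤ c * (1 - (ε : ℝ)) / (2 * π ^ 2 * (m : ℝ) ^ 2)) →
      ∃ t : ℝ, 2 * π * (M : ℝ) ≤ t ∧ f t = 0 := by
  obtain rfl : f = expCosSin a c := funext hf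
  have hε : (0 : ℝ) < ε := by exact_mod_cast hε0
  -- `M ≥ c ^ 2 / ε` forces `δ ^ 2 ≤ ε`; `M ≥ c` makes `eᵗ` beat `c` at `2πm + π`.
  refine ⟨⌈c ^ 2 / ε + c⌉₊, ?_⟩
  rintro ⟨n, m, hMm, happ⟩
  have hm : 0 < m := (Nat.ceil_pos.mpr (by positivity)).trans_le hMm
  have hM : c ^ 2 / ε + c ≤ m := (Nat.le_ceil _).trans (by exact_mod_cast hMm)
  have hcm : c ^ 2 ≤ ε * m := by
    have := (div_le_iff₀ hε).mp (le_of_add_le_of_nonneg_left hM hcpos.le)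
    linarith
  have hc_le_m : c ≤ m := by linarith [div_nonneg (sq_nonneg c) hε.le]
  set δ := a * (m * (2 * π)) - n * (2 * π)
  have hphase : π * m * |δ| ≤ c * (1 - ε) := pi_mul_abs_sub_nat_mul_two_pi_le hm happ
  have hδ : δ ^ 2 ≤ ε := sq_le_of_mul_abs_le (by exact_mod_cast hm)
    (by nlinarith [pi_gt_three, abs_nonneg δ]) hcm
  have h₀ : expCosSin a c (m * (2 * π)) ≤ 0 := by
    rw [expCosSin_nat_mul_two_pi a c m n]
    linarith [mul_one_sub_cos_le_mul_abs_sin (t := m * (2 * π)) (ε := ε) (δ := δ)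
      (by positivity) hcpos.le (by linarith) (by linarith)]
  have h₁ : 0 < expCosSin a c (m * (2 * π) + π) :=
    expCosSin_pos_of_cos_eq_neg_one (by positivity) (by nlinarith [pi_gt_three])
      (cos_nat_mul_two_pi_add_pi m)
  obtain ⟨t, ht, hzero⟩ := intermediate_value_Icc (by linarith [pi_pos])
    (continuous_expCosSin a c).continuousOn ⟨h₀, h₁.le⟩
  refine ⟨t, le_trans ?_ ht.1, hzero⟩
  nlinarith [pi_pos, (Nat.cast_le (α := ℝ)).mpr hMm]

/-- Lemma 7: there is an effective threshold M such that if natural numbers n, m with m ≥ M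
witness |a − n/m| ≤ c(1 − ε)/(2π²m²), then f(t) = e^t(1 − cos t) + t(1 − cos(at)) − c|sin(at)|
has a zero at some t ≥ 2πM. -/
theorem good_approximation_forces_zero
    (a c : ℝ) (ha : IsAlgebraic ℚ a) (hc : IsAlgebraic ℚ c)
    (hapos : 0 < a) (hcpos : 0 < c)
    (ε : ℚ) (hε0 : 0 < ε) (hε1 : ε < 1)
    (f : ℝ → ℝ)
    (hf : ∀ t, f t = Real.exp t * (1 - Real.cos t) + t * (1 - Real.cos (a * t))
        - c * |Real.sin (a * t)|) :
    ∃ M : ℕ,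
      (∃ n m : ℕ, M ≤ m ∧
        |a - (n : ℝ) / (m : ℝ)| ≤ c * (1 - (ε : ℝ)) / (2 * π ^ 2 * (m : ℝ) ^ 2)) →
      ∃ t : ℝ, 2 * π * (M : ℝ) ≤ t ∧ f t = 0 :=
  good_approximation_forces_zero_general a c hcpos ε hε0 f hf
end
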